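/- arXiv:2002.01352 — 6 statements merged into one kernel-verified Lean document; each statement's English description precedes it below -/
import Mathlib

section
/- For every n, the function h₃(x) = π²‖x‖² − Σ_{i=1}^n sin²(π xᵢ) is convex on ℝⁿ. Hence p₃ = g₃ − h₃ is a difference of two convex functions, where g₃(x) = π²‖x‖². -/
/-!
Writing `h₃(x) = ∑ i, G (π xᵢ)` with `G s = s² - sin² s`, it suffices that `G` is convex on `ℝ`.
Its derivative `2s - sin 2s` is monotone because `sin` is `1`-Lipschitz.
-/

open Real Finset

section SumConvex

variable {𝕜 E F ι β : Type*} [Semiring 𝕜] [PartialOrder 𝕜] [AddCommMonoid E] [AddCommMonoid F]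
  [AddCommMonoid β] [PartialOrder β] [IsOrderedAddMonoid β] [DistribMulAction 𝕜 β]

theorem ConvexOn.sum [SMul 𝕜 E] {s : Set E} (hs : Convex 𝕜 s) {t : Finset ι} {f : ι → E → β}
    (hf : ∀ i ∈ t, ConvexOn 𝕜 s (f i)) : ConvexOn 𝕜 s fun x ↦ ∑ i ∈ t, f i x := by
  rw [← Finset.sum_fn]
  exact Finset.sum_induction f (ConvexOn 𝕜 s) (fun _ _ ↦ ConvexOn.add)
    ⟨hs, fun _ _ _ _ _ _ _ _ _ ↦ by simp⟩ hf

theorem ConvexOn.sum_comp_linearMap [Module 𝕜 E] [Module 𝕜 F] [Fintype ι] {f : F → β}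
    (hf : ConvexOn 𝕜 Set.univ f) (g : ι → E →ₗ[𝕜] F) :
    ConvexOn 𝕜 Set.univ fun x ↦ ∑ i, f (g i x) :=
  ConvexOn.sum convex_univ fun i _ ↦ hf.comp_linearMap (g i)

end SumConvex

theorem monotone_two_mul_sub_sin_two_mul : Monotone fun s : ℝ ↦ 2 * s - sin (2 * s) := by
  intro a b hab
  have hsin : sin (2 * b) - sin (2 * a) ≤ 2 * b - 2 * a :=
    (le_abs_self _).trans ((abs_sin_sub_sin_le _ _).trans_eq (abs_of_nonneg (by linarith)))
  show 2 * a - sin (2 * a) ≤ 2 * b - sin (2 * b)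
  linarith

theorem hasDerivAt_sq_sub_sin_sq (s : ℝ) :
    HasDerivAt (fun s : ℝ ↦ s ^ 2 - sin s ^ 2) (2 * s - sin (2 * s)) s := by
  refine ((hasDerivAt_pow 2 s).fun_sub ((hasDerivAt_sin s).fun_pow 2)).congr_deriv ?_
  rw [sin_two_mul]
  norm_num

theorem convexOn_univ_sq_sub_sin_sq : ConvexOn ℝ Set.univ fun s : ℝ ↦ s ^ 2 - sin s ^ 2 := by
  have hderiv : deriv (fun s : ℝ ↦ s ^ 2 - sin s ^ 2) = fun s ↦ 2 * s - sin (2 * s) :=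
    funext fun s ↦ (hasDerivAt_sq_sub_sin_sq s).deriv
  refine Monotone.convexOn_univ_of_deriv (fun s ↦ (hasDerivAt_sq_sub_sin_sq s).differentiableAt) ?_
  rw [hderiv]
  exact monotone_two_mul_sub_sin_two_mul

theorem stmt_5 (n : ℕ) :
    ConvexOn ℝ Set.univ
      (fun x : EuclideanSpace ℝ (Fin n) => π ^ 2 * ‖x‖ ^ 2 - ∑ i, Real.sin (π * x i) ^ 2) ∧
    ConvexOn ℝ Set.univ (fun x : EuclideanSpace ℝ (Fin n) => π ^ 2 * ‖x‖ ^ 2) ∧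
    ∀ x : EuclideanSpace ℝ (Fin n),
      (∑ i, Real.sin (π * x i) ^ 2) =
        (π ^ 2 * ‖x‖ ^ 2) - (π ^ 2 * ‖x‖ ^ 2 - ∑ i, Real.sin (π * x i) ^ 2) := by
  let scaledProj : Fin n → EuclideanSpace ℝ (Fin n) →ₗ[ℝ] ℝ :=
    fun i ↦ π • (EuclideanSpace.proj i : EuclideanSpace ℝ (Fin n) →L[ℝ] ℝ).toLinearMap
  have hscaledProj (i) (x : EuclideanSpace ℝ (Fin n)) : scaledProj i x = π * x i := rfl
  have hnorm (x : EuclideanSpace ℝ (Fin n)) : π ^ 2 * ‖x‖ ^ 2 = ∑ i, (π * x i) ^ 2 := by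
    simp only [EuclideanSpace.real_norm_sq_eq, mul_sum, mul_pow]
  refine ⟨?_, ?_, fun x ↦ by ring⟩
  · simpa only [hscaledProj, hnorm, sum_sub_distrib] using
      convexOn_univ_sq_sub_sin_sq.sum_comp_linearMap scaledProj
  · simpa only [hscaledProj, hnorm] using
      (even_two.convexOn_pow (𝕜 := ℝ)).sum_comp_linearMap scaledProj
end

section
/- (Exact penalty for p₁.) There exists t₀ ≥ 0 such that for every t > t₀, the set of global optimal solutions of min{⟨c,x⟩ : x ∈ S} equals the set of global optimal solutions of min{⟨c,x⟩ + t·p₁(x) : x ∈ K}. -/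
open Finset

private noncomputable def ind {n : ℕ} (σ : Fin n → Bool) : Fin n → ℝ :=
  fun i => if σ i then 1 else 0

private lemma ind_mem01 {n : ℕ} (σ : Fin n → Bool) (i : Fin n) :
    0 ≤ ind σ i ∧ ind σ i ≤ 1 := by
  unfold ind; split <;> norm_num

private lemma ind_zero_or_one {n : ℕ} (σ : Fin n → Bool) (i : Fin n) :
    ind σ i = 0 ∨ ind σ i = 1 := by
  unfold ind; split <;> simp

theorem stmt_6 (m n : ℕ) (A : Matrix (Fin m) (Fin n) ℝ) (b : Fin m → ℝ) (c : Fin n → ℝ)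
    (K S : Set (Fin n → ℝ))
    (hK : K = {x | (∀ i, 0 ≤ x i ∧ x i ≤ 1) ∧ A.mulVec x = b})
    (hS : S = {x ∈ K | ∀ i, x i = 0 ∨ x i = 1})
    (hSne : S.Nonempty) :
    ∃ t₀ : ℝ, 0 ≤ t₀ ∧ ∀ t > t₀,
      {x ∈ S | ∀ y ∈ S, ∑ i, c i * x i ≤ ∑ i, c i * y i} =
      {x ∈ K | ∀ y ∈ K,
        (∑ i, c i * x i) + t * (∑ i, min (x i) (1 - x i)) ≤
        (∑ i, c i * y i) + t * (∑ i, min (y i) (1 - y i))} := by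
  classical
  -- basic constants
  set C : ℝ := ∑ i, |c i| with hCdef
  have hCnn : 0 ≤ C := Finset.sum_nonneg fun i _ => abs_nonneg _
  set M : ℝ := ∑ j, ∑ i, |A j i| with hMdef
  have hMnn : 0 ≤ M := Finset.sum_nonneg fun j _ =>
    Finset.sum_nonneg fun i _ => abs_nonneg _
  set g : (Fin n → Bool) → ℝ := fun σ => ∑ j, |A.mulVec (ind σ) j - b j| with hgdef
  -- indicator vectors of feasible sign patterns are in S
  have hindS : ∀ σ : Fin n → Bool, A.mulVec (ind σ) = b → ind σ ∈ S := by
    intro σ hσ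
    rw [hS]
    refine ⟨?_, fun i => ind_zero_or_one σ i⟩
    rw [hK]; exact ⟨fun i => ind_mem01 σ i, hσ⟩
  -- every element of S is an indicator vector of a feasible pattern
  have hSind : ∀ x ∈ S, ∃ σ : Fin n → Bool, ind σ = x ∧ A.mulVec (ind σ) = b := by
    intro x hx
    rw [hS] at hx
    obtain ⟨hxK, hx01⟩ := hx
    rw [hK] at hxK
    refine ⟨fun i => if x i = 1 then true else false, ?_, ?_⟩
    · funext i
      rcases hx01 i with h | h <;> simp [ind, h]
    · have : ind (fun i => if x i = 1 then true else false) = x := by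
        funext i
        rcases hx01 i with h | h <;> simp [ind, h]
      rw [this]; exact hxK.2
  -- S ⊆ K
  have hSK : S ⊆ K := by rw [hS]; exact fun x hx => hx.1
  -- penalty vanishes on S, nonneg on K
  have hp0 : ∀ x ∈ S, (∑ i, min (x i) (1 - x i)) = 0 := by
    intro x hx
    rw [hS] at hx
    refine Finset.sum_eq_zero fun i _ => ?_
    rcases hx.2 i with h | h <;> simp [h]
  have hpnn : ∀ x ∈ K, 0 ≤ ∑ i, min (x i) (1 - x i) := by
    intro x hx
    rw [hK] at hx
    refine Finset.sum_nonneg fun i _ => le_min (hx.1 i).1 (by linarith [(hx.1 i).2])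
  -- a minimizer over S
  have hGoodne : (Finset.univ.filter fun σ : Fin n → Bool => A.mulVec (ind σ) = b).Nonempty := by
    obtain ⟨x, hx⟩ := hSne
    obtain ⟨σ, _, hσb⟩ := hSind x hx
    exact ⟨σ, by simp [hσb]⟩
  obtain ⟨σw, hσwmem, hσwmin⟩ :=
    Finset.exists_min_image (Finset.univ.filter fun σ : Fin n → Bool => A.mulVec (ind σ) = b)
      (fun σ => ∑ i, c i * ind σ i) hGoodne
  have hσwb : A.mulVec (ind σw) = b := by simpa using hσwmem
  set w : Fin n → ℝ := ind σw with hwdef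
  have hwS : w ∈ S := hindS σw hσwb
  set v : ℝ := ∑ i, c i * w i with hvdef
  have hvmin : ∀ y ∈ S, v ≤ ∑ i, c i * y i := by
    intro y hy
    obtain ⟨τ, hτy, hτb⟩ := hSind y hy
    rw [← hτy]
    exact hσwmin τ (by simp [hτb])
  -- positive lower bound on residuals of infeasible patterns
  obtain ⟨δ, hδpos, hδ⟩ : ∃ δ : ℝ, 0 < δ ∧ ∀ σ : Fin n → Bool, A.mulVec (ind σ) ≠ b → δ ≤ g σ := by
    rcases (Finset.univ.filter fun σ : Fin n → Bool => A.mulVec (ind σ) ≠ b).eq_empty_or_nonempty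
      with hemp | hne
    · refine ⟨1, one_pos, fun σ hσ => ?_⟩
      have hmem : σ ∈ Finset.univ.filter fun σ : Fin n → Bool => A.mulVec (ind σ) ≠ b :=
        Finset.mem_filter.mpr ⟨Finset.mem_univ σ, hσ⟩
      rw [hemp] at hmem
      simp at hmem
    · obtain ⟨σ₀, hσ₀mem, hσ₀min⟩ :=
        Finset.exists_min_image _ g hne
      have hσ₀b : A.mulVec (ind σ₀) ≠ b := by
        have := Finset.mem_filter.mp hσ₀mem; exact this.2
      refine ⟨g σ₀, ?_, fun σ hσ => hσ₀min σ (by simp [hσ])⟩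
      have : ∃ j, A.mulVec (ind σ₀) j ≠ b j := by
        by_contra h
        push_neg at h
        exact hσ₀b (funext h)
      obtain ⟨j, hj⟩ := this
      refine Finset.sum_pos' (fun j _ => abs_nonneg _) ⟨j, Finset.mem_univ j, ?_⟩
      exact abs_pos.mpr (sub_ne_zero.mpr hj)
  -- the threshold
  refine ⟨max C ((v + C) * (M + 1) / δ), le_trans hCnn (le_max_left _ _), ?_⟩
  intro t ht
  have htC : C < t := lt_of_le_of_lt (le_max_left _ _) ht
  have htδ : (v + C) * (M + 1) / δ < t := lt_of_le_of_lt (le_max_right _ _) ht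
  have htpos : 0 < t := lt_of_le_of_lt hCnn htC
  -- the key lemma
  have star : ∀ y ∈ K, v ≤ (∑ i, c i * y i) + t * (∑ i, min (y i) (1 - y i)) ∧
      ((∑ i, c i * y i) + t * (∑ i, min (y i) (1 - y i)) = v → y ∈ S) := by
    intro y hyK
    have hyK' : (∀ i, 0 ≤ y i ∧ y i ≤ 1) ∧ A.mulVec y = b := by rw [hK] at hyK; exact hyK
    set P : ℝ := ∑ i, min (y i) (1 - y i) with hPdef
    have hPnn : 0 ≤ P := hpnn y hyK
    have hminnn : ∀ i, 0 ≤ min (y i) (1 - y i) := fun i =>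
      le_min (hyK'.1 i).1 (by linarith [(hyK'.1 i).2])
    have hminleP : ∀ i, min (y i) (1 - y i) ≤ P := by
      intro i
      exact Finset.single_le_sum (fun j _ => hminnn j) (Finset.mem_univ i)
    -- rounding
    set σy : Fin n → Bool := fun i => if 1/2 < y i then true else false with hσydef
    set z : Fin n → ℝ := ind σy with hzdef
    have habs : ∀ i, |z i - y i| = min (y i) (1 - y i) := by
      intro i
      have h0 := (hyK'.1 i).1
      have h1 := (hyK'.1 i).2
      by_cases h : 1/2 < y i
      · have hz : z i = 1 := by simp only [hzdef, ind, hσydef, if_pos h]; simp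
        rw [hz, abs_of_nonneg (by linarith), min_eq_right (by linarith)]
      · have hz : z i = 0 := by simp only [hzdef, ind, hσydef, if_neg h]; simp
        push_neg at h
        rw [hz, abs_of_nonpos (by linarith), min_eq_left (by linarith)]
        ring
    -- cost difference bound
    have hcost : |(∑ i, c i * z i) - ∑ i, c i * y i| ≤ C * P := by
      rw [← Finset.sum_sub_distrib]
      calc |∑ i, (c i * z i - c i * y i)| ≤ ∑ i, |c i * z i - c i * y i| :=
            Finset.abs_sum_le_sum_abs _ _
        _ = ∑ i, |c i| * min (y i) (1 - y i) := by
            refine Finset.sum_congr rfl fun i _ => ?_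
            rw [← mul_sub, abs_mul, habs i]
        _ ≤ ∑ i, |c i| * P := Finset.sum_le_sum fun i _ =>
            mul_le_mul_of_nonneg_left (hminleP i) (abs_nonneg _)
        _ = C * P := by rw [← Finset.sum_mul]
    by_cases hzb : A.mulVec z = b
    -- good case: rounding is feasible
    · have hzS : z ∈ S := hindS σy hzb
      have hv_z : v ≤ ∑ i, c i * z i := hvmin z hzS
      have h1 : v - C * P ≤ ∑ i, c i * y i := by
        have := abs_le.mp hcost
        linarith
      constructor
      · nlinarith
      · intro heq
        have hP0 : P = 0 := by nlinarith
        have hyz : y = z := by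
          funext i
          have : min (y i) (1 - y i) = 0 := by
            have := (Finset.sum_eq_zero_iff_of_nonneg (fun i _ => hminnn i)).mp hP0 i
              (Finset.mem_univ i)
            exact this
          have := habs i
          rw [this] at *
          have : |z i - y i| = 0 := by rw [habs i]; exact ‹min (y i) (1 - y i) = 0›
          have := abs_eq_zero.mp this
          linarith
        rw [hyz]; exact hzS
    -- bad case: rounding infeasible, penalty is large
    · have hres : ∀ j, |A.mulVec z j - b j| ≤ (∑ i, |A j i|) * P := by
        intro j
        have hb : b j = A.mulVec y j := by rw [hyK'.2]
        rw [hb]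
        show |A.mulVec z j - A.mulVec y j| ≤ _
        unfold Matrix.mulVec dotProduct
        rw [← Finset.sum_sub_distrib]
        calc |∑ i, (A j i * z i - A j i * y i)| ≤ ∑ i, |A j i * z i - A j i * y i| :=
              Finset.abs_sum_le_sum_abs _ _
          _ = ∑ i, |A j i| * min (y i) (1 - y i) := by
              refine Finset.sum_congr rfl fun i _ => ?_
              rw [← mul_sub, abs_mul, habs i]
          _ ≤ ∑ i, |A j i| * P := Finset.sum_le_sum fun i _ =>
              mul_le_mul_of_nonneg_left (hminleP i) (abs_nonneg _)
          _ = (∑ i, |A j i|) * P := by rw [← Finset.sum_mul]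
      have hgM : g σy ≤ M * P := by
        rw [hgdef]
        calc ∑ j, |A.mulVec (ind σy) j - b j| ≤ ∑ j, (∑ i, |A j i|) * P :=
              Finset.sum_le_sum fun j _ => hres j
          _ = M * P := by rw [← Finset.sum_mul]
      have hδg : δ ≤ g σy := hδ σy hzb
      have hPlb : δ ≤ (M + 1) * P := by nlinarith
      have hfy_lb : -C ≤ ∑ i, c i * y i := by
        have : |∑ i, c i * y i| ≤ C := by
          calc |∑ i, c i * y i| ≤ ∑ i, |c i * y i| := Finset.abs_sum_le_sum_abs _ _
            _ ≤ ∑ i, |c i| := Finset.sum_le_sum fun i _ => by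
                rw [abs_mul]
                have h0 := (hyK'.1 i).1
                have h1 := (hyK'.1 i).2
                have : |y i| ≤ 1 := by rw [abs_of_nonneg h0]; exact h1
                nlinarith [abs_nonneg (c i)]
        linarith [(abs_le.mp this).1]
      have hkey : (v + C) * (M + 1) < t * δ := (div_lt_iff₀ hδpos).mp htδ
      have hstrict : v < (∑ i, c i * y i) + t * P := by nlinarith
      exact ⟨le_of_lt hstrict, fun heq => absurd heq (by linarith)⟩
  -- value of w
  have hwK : w ∈ K := hSK hwS
  have hpw : (∑ i, min (w i) (1 - w i)) = 0 := hp0 w hwS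
  -- set equality
  ext x
  simp only [Set.mem_setOf_eq, Set.mem_sep_iff]
  constructor
  · rintro ⟨hxS, hxmin⟩
    have hfx : (∑ i, c i * x i) = v := le_antisymm (hxmin w hwS) (hvmin x hxS)
    have hpx : (∑ i, min (x i) (1 - x i)) = 0 := hp0 x hxS
    refine ⟨hSK hxS, fun y hy => ?_⟩
    rw [hfx, hpx, mul_zero, add_zero]
    exact (star y hy).1
  · rintro ⟨hxK, hxmin⟩
    have hle : (∑ i, c i * x i) + t * (∑ i, min (x i) (1 - x i)) ≤ v := by
      have := hxmin w hwK
      rw [hpw, mul_zero, add_zero] at this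
      exact this
    have hge := (star x hxK).1
    have heq : (∑ i, c i * x i) + t * (∑ i, min (x i) (1 - x i)) = v := le_antisymm hle hge
    have hxS : x ∈ S := (star x hxK).2 heq
    have hpx : (∑ i, min (x i) (1 - x i)) = 0 := hp0 x hxS
    have hfx : (∑ i, c i * x i) = v := by rw [hpx, mul_zero, add_zero] at heq; exact heq
    exact ⟨hxS, fun y hy => hfx ▸ hvmin y hy⟩
end

section
/- (Exact penalty for p₂.) There exists t₀ ≥ 0 such that for every t > t₀, the set of global optimal solutions of min{⟨c,x⟩ : x ∈ S} equals the set of global optimal solutions of min{⟨c,x⟩ + t·p₂(x) : x ∈ K}. -/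
open Finset in
private lemma sum_pen_nonneg {n : ℕ} (x : Fin n → ℝ) (hx : ∀ i, 0 ≤ x i ∧ x i ≤ 1) :
    0 ≤ ∑ i, x i * (1 - x i) :=
  Finset.sum_nonneg fun i _ => mul_nonneg (hx i).1 (by linarith [(hx i).2])

private lemma pen_eq_zero {n : ℕ} (x : Fin n → ℝ) (hx : ∀ i, x i = 0 ∨ x i = 1) :
    ∑ i, x i * (1 - x i) = 0 :=
  Finset.sum_eq_zero fun i _ => by rcases hx i with h | h <;> simp [h]

private lemma lin_bound {n : ℕ} (c x z : Fin n → ℝ) (hx : ∀ i, 0 ≤ x i ∧ x i ≤ 1)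
    (hz : ∀ i, 0 ≤ z i ∧ z i ≤ 1) :
    (∑ i, c i * x i) - (∑ i, c i * z i) ≤ ∑ i, |c i| := by
  rw [← Finset.sum_sub_distrib]
  apply Finset.sum_le_sum
  intro i _
  have h1 : c i * x i - c i * z i = c i * (x i - z i) := by ring
  have h2 : |x i - z i| ≤ 1 := by
    rw [abs_le]; constructor <;> [linarith [(hx i).1, (hz i).2]; linarith [(hx i).2, (hz i).1]]
  calc c i * x i - c i * z i ≤ |c i * (x i - z i)| := h1 ▸ le_abs_self _
    _ = |c i| * |x i - z i| := abs_mul _ _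
    _ ≤ |c i| * 1 := mul_le_mul_of_nonneg_left h2 (abs_nonneg _)
    _ = |c i| := mul_one _

private lemma pen_sum_identity {n : ℕ} (c : Fin n → ℝ) (t : ℝ) (x u : Fin n → ℝ) :
    (∑ i, c i * (x i + u i) + t * ∑ i, (x i + u i) * (1 - (x i + u i)))
    + (∑ i, c i * (x i - u i) + t * ∑ i, (x i - u i) * (1 - (x i - u i)))
    = 2 * (∑ i, c i * x i + t * ∑ i, x i * (1 - x i)) - 2 * t * ∑ i, (u i)^2 := by
  simp only [Finset.mul_sum, ← Finset.sum_add_distrib, ← Finset.sum_sub_distrib]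
  exact Finset.sum_congr rfl fun i _ => by ring

theorem stmt_7 (m n : ℕ) (A : Matrix (Fin m) (Fin n) ℝ) (b : Fin m → ℝ) (c : Fin n → ℝ)
    (K S : Set (Fin n → ℝ))
    (hK : K = {x | (∀ i, 0 ≤ x i ∧ x i ≤ 1) ∧ A.mulVec x = b})
    (hS : S = {x ∈ K | ∀ i, x i = 0 ∨ x i = 1})
    (hSne : S.Nonempty) :
    ∃ t₀ : ℝ, 0 ≤ t₀ ∧ ∀ t > t₀,
      {x ∈ S | ∀ y ∈ S, ∑ i, c i * x i ≤ ∑ i, c i * y i} =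
      {x ∈ K | ∀ y ∈ K,
        (∑ i, c i * x i) + t * (∑ i, x i * (1 - x i)) ≤
        (∑ i, c i * y i) + t * (∑ i, y i * (1 - y i))} := by
  classical
  -- abbreviations
  set p : (Fin n → ℝ) → ℝ := fun x => ∑ i, x i * (1 - x i) with hp
  set f : ℝ → (Fin n → ℝ) → ℝ := fun t x => (∑ i, c i * x i) + t * p x with hf
  have hKmem : ∀ x, x ∈ K ↔ (∀ i, 0 ≤ x i ∧ x i ≤ 1) ∧ A.mulVec x = b := by
    intro x; rw [hK]; rfl
  have hSmem : ∀ x, x ∈ S ↔ x ∈ K ∧ ∀ i, x i = 0 ∨ x i = 1 := by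
    intro x; rw [hS]; exact Iff.rfl
  -- "basic" (vertex-like) points
  set NB : (Fin n → ℝ) → Prop := fun x =>
    ∀ d : Fin n → ℝ, A.mulVec d = 0 → (∀ i, d i ≠ 0 → 0 < x i ∧ x i < 1) → d = 0 with hNB
  -- Step 1: any minimizer of the penalized objective (t > 0) is basic.
  have step1 : ∀ t > (0:ℝ), ∀ x ∈ K, (∀ y ∈ K, f t x ≤ f t y) → NB x := by
    intro t ht x hxK hmin d hd hsupp
    by_contra hd0
    have hex : ∃ i, d i ≠ 0 := by
      by_contra h; push_neg at h; exact hd0 (funext fun i => h i)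
    obtain ⟨i0, hi0⟩ := hex
    set F : Finset (Fin n) := Finset.univ.filter (fun i => d i ≠ 0) with hF
    have hFne : F.Nonempty := ⟨i0, by simp [hF, hi0]⟩
    set η : ℝ := F.inf' hFne (fun i => min (x i) (1 - x i)) with hη
    set D : ℝ := F.sup' hFne (fun i => |d i|) with hD
    have hxb := (hKmem x).1 hxK
    have hηpos : 0 < η := by
      rw [hη, Finset.lt_inf'_iff]
      intro i hi
      have hdi : d i ≠ 0 := by simpa [hF] using hi
      obtain ⟨h1, h2⟩ := hsupp i hdi
      exact lt_min h1 (by linarith)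
    have hDpos : 0 < D := by
      have hi0F : i0 ∈ F := by simp [hF, hi0]
      exact lt_of_lt_of_le (abs_pos.2 hi0) (Finset.le_sup' (fun i => |d i|) hi0F)
    set ε : ℝ := η / D with hε
    have hεpos : 0 < ε := div_pos hηpos hDpos
    have hbound : ∀ i, d i ≠ 0 → ε * |d i| ≤ min (x i) (1 - x i) := by
      intro i hdi
      have hiF : i ∈ F := by simp [hF, hdi]
      have h1 : |d i| ≤ D := Finset.le_sup' (fun i => |d i|) hiF
      have h2 : η ≤ min (x i) (1 - x i) := Finset.inf'_le _ hiF
      have h3 : ε * |d i| ≤ ε * D := mul_le_mul_of_nonneg_left h1 hεpos.le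
      have h4 : ε * D = η := div_mul_cancel₀ _ hDpos.ne'
      linarith
    have hmem : ∀ σ : ℝ, |σ| = ε → x + σ • d ∈ K := by
      intro σ hσ
      rw [hKmem]
      constructor
      · intro i
        simp only [Pi.add_apply, Pi.smul_apply, smul_eq_mul]
        by_cases hdi : d i = 0
        · simpa [hdi] using hxb.1 i
        · have h1 : |σ * d i| ≤ min (x i) (1 - x i) := by
            rw [abs_mul, hσ]; exact hbound i hdi
          have h2 := neg_abs_le (σ * d i)
          have h3 := le_abs_self (σ * d i)
          have h4 : min (x i) (1 - x i) ≤ x i := min_le_left _ _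
          have h5 : min (x i) (1 - x i) ≤ 1 - x i := min_le_right _ _
          constructor <;> linarith
      · rw [Matrix.mulVec_add, Matrix.mulVec_smul, hd, smul_zero, add_zero]
        exact ((hKmem x).1 hxK).2
    have hmemp : x + ε • d ∈ K := hmem ε (abs_of_pos hεpos)
    have hmemm : x + (-ε) • d ∈ K := hmem (-ε) (by rw [abs_neg]; exact abs_of_pos hεpos)
    have hA := hmin _ hmemp
    have hB := hmin _ hmemm
    have hkey : f t (x + ε • d) + f t (x + (-ε) • d)
        = 2 * f t x - 2 * t * ∑ i, (ε * d i)^2 := by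
      have h1 : x + (-ε) • d = (fun i => x i - ε * d i) := by
        funext i; simp; ring
      have h2 : x + ε • d = (fun i => x i + ε * d i) := by
        funext i; simp
      rw [h1, h2, hf, hp]
      simpa using pen_sum_identity c t x (fun i => ε * d i)
    have hsum : 0 < ∑ i, (ε * d i)^2 := by
      apply Finset.sum_pos' (fun i _ => sq_nonneg _)
      refine ⟨i0, Finset.mem_univ _, ?_⟩
      have : ε * d i0 ≠ 0 := mul_ne_zero hεpos.ne' hi0
      positivity
    nlinarith
  -- Step 2: the set of basic nonbinary points has a positive lower bound on p.
  have step2 : ∃ δ : ℝ, 0 < δ ∧ ∀ x ∈ K, NB x → ¬(∀ i, x i = 0 ∨ x i = 1) → δ ≤ p x := by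
    set V : Set (Fin n → ℝ) := {x | x ∈ K ∧ NB x ∧ ¬(∀ i, x i = 0 ∨ x i = 1)} with hV
    set pat : (Fin n → ℝ) → (Fin n → Fin 3) := fun x i =>
      if x i = 0 then 0 else if x i = 1 then 1 else 2 with hpat
    have hinj : Set.InjOn pat V := by
      intro x hx y hy hpxy
      have hdx : A.mulVec (x - y) = 0 := by
        rw [Matrix.mulVec_sub, ((hKmem x).1 hx.1).2, ((hKmem y).1 hy.1).2, sub_self]
      have hfr : ∀ i, (x - y) i ≠ 0 → 0 < x i ∧ x i < 1 := by
        intro i hne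
        have hxyi : x i ≠ y i := by
          intro h; apply hne; simp [h]
        have hpi : pat x i = pat y i := congrFun hpxy i
        by_cases h0 : x i = 0
        · exfalso
          have : pat y i = 0 := by rw [← hpi, hpat]; simp [h0]
          rw [hpat] at this
          by_cases hy0 : y i = 0
          · exact hxyi (by rw [h0, hy0])
          · by_cases hy1 : y i = 1 <;> simp [hy0, hy1] at this
        · by_cases h1 : x i = 1
          · exfalso
            have : pat y i = 1 := by rw [← hpi, hpat]; simp [h0, h1]
            rw [hpat] at this
            by_cases hy0 : y i = 0
            · simp [hy0] at this
            · by_cases hy1 : y i = 1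
              · exact hxyi (by rw [h1, hy1])
              · simp [hy0, hy1] at this
          · have hb := ((hKmem x).1 hx.1).1 i
            exact ⟨lt_of_le_of_ne hb.1 (Ne.symm h0), lt_of_le_of_ne hb.2 h1⟩
      have := hx.2.1 (x - y) hdx hfr
      exact sub_eq_zero.1 this
    have hVfin : V.Finite := Set.Finite.of_finite_image (Set.toFinite _) hinj
    by_cases hVne : V.Nonempty
    · obtain ⟨x₀, hx₀, hx₀min⟩ := Set.exists_min_image V p hVfin hVne
      refine ⟨p x₀, ?_, fun x hxK hnb hnbin => hx₀min x ⟨hxK, hnb, hnbin⟩⟩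
      -- p x₀ > 0 since x₀ is nonbinary and in K
      have hb := ((hKmem x₀).1 hx₀.1).1
      have hnbin := hx₀.2.2
      push_neg at hnbin
      obtain ⟨i0, h0, h1⟩ := hnbin
      rw [hp]
      apply Finset.sum_pos' (fun i _ => mul_nonneg (hb i).1 (by linarith [(hb i).2]))
      refine ⟨i0, Finset.mem_univ _, ?_⟩
      have hl : 0 < x₀ i0 := lt_of_le_of_ne (hb i0).1 (Ne.symm h0)
      have hr : x₀ i0 < 1 := lt_of_le_of_ne (hb i0).2 h1
      exact mul_pos hl (by linarith)
    · exact ⟨1, one_pos, fun x hxK hnb hnbin => absurd ⟨hxK, hnb, hnbin⟩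
        (fun h => hVne ⟨x, h⟩)⟩
  obtain ⟨δ, hδpos, hδmin⟩ := step2
  -- Step 3: existence of a minimizer of f t over K
  have hKcomp : IsCompact K := by
    have hset : K = Set.Icc (0 : Fin n → ℝ) 1 ∩ A.mulVec ⁻¹' {b} := by
      ext x
      simp [hKmem, Set.mem_Icc, Pi.le_def, forall_and]
    rw [hset]
    exact isCompact_Icc.inter_right
      (isClosed_singleton.preimage A.mulVecLin.continuous_of_finiteDimensional)
  obtain ⟨s₀, hs₀S⟩ := hSne
  have hs₀K : s₀ ∈ K := ((hSmem s₀).1 hs₀S).1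
  have hKne : K.Nonempty := ⟨s₀, hs₀K⟩
  have step3 : ∀ t : ℝ, ∃ z ∈ K, ∀ y ∈ K, f t z ≤ f t y := by
    intro t
    have hcont : Continuous (f t) := by
      rw [hf, hp]; fun_prop
    obtain ⟨z, hzK, hzmin⟩ := hKcomp.exists_isMinOn hKne hcont.continuousOn
    exact ⟨z, hzK, fun y hy => hzmin hy⟩
  -- the penalty bound
  set M : ℝ := ∑ i, |c i| with hM
  have hMnn : 0 ≤ M := Finset.sum_nonneg fun i _ => abs_nonneg _
  refine ⟨M / δ, div_nonneg hMnn hδpos.le, ?_⟩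
  intro t ht
  have ht0 : 0 < t := lt_of_le_of_lt (div_nonneg hMnn hδpos.le) ht
  have hMlt : M < t * δ := (div_lt_iff₀ hδpos).1 ht
  -- Step 4: any minimizer of f t over K is binary
  have step4 : ∀ z ∈ K, (∀ y ∈ K, f t z ≤ f t y) → (∀ i, z i = 0 ∨ z i = 1) := by
    intro z hzK hzmin
    have hnb : NB z := step1 t ht0 z hzK hzmin
    by_contra hnbin
    have hδz : δ ≤ p z := hδmin z hzK hnb hnbin
    have hfs : f t z ≤ f t s₀ := hzmin s₀ hs₀K
    have hps₀ : p s₀ = 0 := pen_eq_zero s₀ ((hSmem s₀).1 hs₀S).2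
    have hcb : (∑ i, c i * s₀ i) - (∑ i, c i * z i) ≤ M :=
      lin_bound c s₀ z ((hKmem s₀).1 hs₀K).1 ((hKmem z).1 hzK).1
    have h1 : t * p z ≤ M := by
      rw [hf] at hfs; simp only at hfs; rw [hps₀] at hfs; linarith
    have h2 : t * δ ≤ t * p z := mul_le_mul_of_nonneg_left hδz ht0.le
    linarith
  -- conclude set equality
  ext x
  simp only [Set.mem_setOf_eq]
  constructor
  · rintro ⟨hxS, hxopt⟩
    have hxK : x ∈ K := ((hSmem x).1 hxS).1
    have hpx : p x = 0 := pen_eq_zero x ((hSmem x).1 hxS).2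
    refine ⟨hxK, ?_⟩
    obtain ⟨z, hzK, hzmin⟩ := step3 t
    have hzbin := step4 z hzK hzmin
    have hzS : z ∈ S := (hSmem z).2 ⟨hzK, hzbin⟩
    have hpz : p z = 0 := pen_eq_zero z hzbin
    intro y hyK
    have h1 : (∑ i, c i * x i) ≤ ∑ i, c i * z i := hxopt z hzS
    have h2 : f t z ≤ f t y := hzmin y hyK
    rw [hf] at h2; simp only at h2; rw [hpz] at h2
    have hpx' : ∑ i, x i * (1 - x i) = 0 := hpx
    have h2' : (∑ i, c i * z i) + t * 0 ≤ (∑ i, c i * y i) + t * ∑ i, y i * (1 - y i) := h2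
    rw [hpx']
    linarith
  · rintro ⟨hxK, hxmin⟩
    have hxmin' : ∀ y ∈ K, f t x ≤ f t y := by
      intro y hy
      rw [hf]; simp only
      exact hxmin y hy
    have hxbin := step4 x hxK hxmin'
    have hxS : x ∈ S := (hSmem x).2 ⟨hxK, hxbin⟩
    refine ⟨hxS, ?_⟩
    intro y hyS
    have hyK : y ∈ K := ((hSmem y).1 hyS).1
    have hpx : p x = 0 := pen_eq_zero x hxbin
    have hpy : p y = 0 := pen_eq_zero y ((hSmem y).1 hyS).2
    have h := hxmin y hyK
    have hpx' : ∑ i, x i * (1 - x i) = 0 := hpx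
    have hpy' : ∑ i, y i * (1 - y i) = 0 := hpy
    rw [hpx', hpy'] at h
    linarith
end

section
/- (Exact penalty with explicit threshold.) Let p : ℝⁿ → ℝ be concave and continuous with p(x) ≥ 0 for all x ∈ K and with {x ∈ K : p(x) ≤ 0} = S. Let V(K) denote the set of extreme points of K, assume E := {x ∈ V(K) : p(x) > 0} is nonempty and finite, and set m := min{p(x) : x ∈ E}, α₀ := min{⟨c,x⟩ : x ∈ K}, and t₀ := (min{⟨c,x⟩ : x ∈ S} − α₀)/m. Then for every t > t₀, the set of global optimal solutions of min{⟨c,x⟩ : x ∈ S} equals the set of global optimal solutions of min{⟨c,x⟩ + t·p(x) : x ∈ K}. -/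
/-!
Every extreme point of `K` lies in `S` (where `p = 0`) or in `E` (where `p ≥ m`), and there are
finitely many of them, so `K` is their convex hull. The concave function `⟨c, x⟩ + t₀ p(x)` therefore
attains its minimum over `K` at an extreme point, where it is at least `β = min_S ⟨c, ·⟩`: on `S`
trivially, on `E` because `⟨c, v⟩ ≥ α₀` and `t₀ m = β - α₀`. So `β` bounds `⟨c, x⟩ + t p(x)` from
below on `K` for `t ≥ t₀`, with equality exactly at the minimisers over `S`; for `t > t₀` a
minimiser over `K` must have `p = 0`, i.e. lie in `S`.
-/

open Set

section KreinMilman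

variable {E : Type*} [AddCommGroup E] [Module ℝ E] [TopologicalSpace E] [T2Space E]
  [IsTopologicalAddGroup E] [ContinuousSMul ℝ E] [LocallyConvexSpace ℝ E] {s : Set E}

theorem IsCompact.convexHull_extremePoints_eq (hs : IsCompact s) (hconv : Convex ℝ s)
    (hfin : (s.extremePoints ℝ).Finite) : convexHull ℝ (s.extremePoints ℝ) = s := by
  rw [← (hfin.isClosed_convexHull ℝ).closure_eq, closure_convexHull_extremePoints hs hconv]

theorem ConcaveOn.le_of_forall_extremePoints_le {g : E → ℝ} {β : ℝ} (hg : ConcaveOn ℝ s g)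
    (hs : IsCompact s) (hfin : (s.extremePoints ℝ).Finite)
    (hβ : ∀ v ∈ s.extremePoints ℝ, β ≤ g v) {x : E} (hx : x ∈ s) : β ≤ g x := by
  obtain ⟨v, hv, hvx⟩ := hg.exists_le_of_mem_convexHull extremePoints_subset
    ((hs.convexHull_extremePoints_eq hg.1 hfin).symm ▸ hx)
  exact (hβ v hv).trans hvx

theorem ConcaveOn.le_add_mul_of_extremePoints {f p : E → ℝ} {α β π t : ℝ}
    (hg : ConcaveOn ℝ s fun x => f x + t * p x) (hs : IsCompact s)
    (hfin : (s.extremePoints ℝ).Finite) (hp : ∀ x ∈ s, 0 ≤ p x) (hα : ∀ x ∈ s, α ≤ f x)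
    (hβ : ∀ v ∈ s.extremePoints ℝ, p v ≤ 0 → β ≤ f v)
    (hπ : ∀ v ∈ s.extremePoints ℝ, 0 < p v → π ≤ p v) (ht : 0 ≤ t) (hαβ : β ≤ α + t * π)
    {x : E} (hx : x ∈ s) : β ≤ f x + t * p x := by
  refine hg.le_of_forall_extremePoints_le hs hfin (fun v hv => ?_) hx
  by_cases hpv : p v ≤ 0
  · rw [le_antisymm hpv (hp v hv.1), mul_zero, add_zero]
    exact hβ v hv hpv
  · nlinarith [hα v hv.1, hπ v hv (not_le.1 hpv)]

end KreinMilman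

section Box

variable {ι κ : Type*} [Fintype ι] (A : Matrix κ ι ℝ) (b : κ → ℝ)

theorem setOf_unitBox_mulVec_eq :
    {x : ι → ℝ | (∀ i, 0 ≤ x i ∧ x i ≤ 1) ∧ A.mulVec x = b} = Icc 0 1 ∩ A.mulVecLin ⁻¹' {b} := by
  ext x
  simp [Pi.le_def, forall_and]

theorem convex_unitBox_mulVec_eq :
    Convex ℝ {x : ι → ℝ | (∀ i, 0 ≤ x i ∧ x i ≤ 1) ∧ A.mulVec x = b} := by
  rw [setOf_unitBox_mulVec_eq]
  exact (convex_Icc 0 1).inter ((convex_singleton b).linear_preimage _)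

theorem isCompact_unitBox_mulVec_eq :
    IsCompact {x : ι → ℝ | (∀ i, 0 ≤ x i ∧ x i ≤ 1) ∧ A.mulVec x = b} := by
  rw [setOf_unitBox_mulVec_eq]
  exact isCompact_Icc.inter_right
    (isClosed_singleton.preimage (LinearMap.continuous_of_finiteDimensional _))

end Box

theorem finite_setOf_forall_eq_zero_or_eq_one {ι : Type*} [Finite ι] :
    {x : ι → ℝ | ∀ i, x i = 0 ∨ x i = 1}.Finite := by
  convert Set.Finite.pi (t := fun _ : ι => ({0, 1} : Set ℝ)) fun _ => by simp
  ext x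
  simp

theorem exact_penalty_argmin_eq {α : Type*} {K S : Set α} {f p : α → ℝ} {s₀ : α} {t₀ t : ℝ}
    (hpnonneg : ∀ x ∈ K, 0 ≤ p x) (hpS : {x ∈ K | p x ≤ 0} = S)
    (hs₀ : s₀ ∈ S) (hs₀min : ∀ y ∈ S, f s₀ ≤ f y)
    (hbound : ∀ y ∈ K, f s₀ ≤ f y + t₀ * p y) (ht : t₀ < t) :
    {x ∈ S | ∀ y ∈ S, f x ≤ f y} = {x ∈ K | ∀ y ∈ K, f x + t * p x ≤ f y + t * p y} := by
  have hp_eq_zero : ∀ x ∈ S, p x = 0 := fun x hx => by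
    rw [← hpS] at hx; exact le_antisymm hx.2 (hpnonneg x hx.1)
  have hSK : S ⊆ K := hpS ▸ sep_subset _ _
  have hbound_t : ∀ y ∈ K, f s₀ ≤ f y + t * p y := fun y hy => by
    nlinarith [hbound y hy, hpnonneg y hy]
  ext x
  constructor
  · rintro ⟨hxS, hxmin⟩
    refine ⟨hSK hxS, fun y hy => ?_⟩
    rw [hp_eq_zero x hxS, mul_zero, add_zero]
    exact (hxmin s₀ hs₀).trans (hbound_t y hy)
  · rintro ⟨hxK, hxmin⟩
    have hx_le : f x + t * p x ≤ f s₀ := by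
      simpa [hp_eq_zero s₀ hs₀] using hxmin s₀ (hSK hs₀)
    have hpx : p x = 0 := by
      nlinarith [hbound x hxK, hpnonneg x hxK]
    have hxS : x ∈ S := hpS ▸ ⟨hxK, hpx.le⟩
    refine ⟨hxS, fun y hy => ?_⟩
    rw [hpx, mul_zero, add_zero] at hx_le
    exact hx_le.trans (hs₀min y hy)

theorem stmt_8_general (m n : ℕ) (A : Matrix (Fin m) (Fin n) ℝ) (b : Fin m → ℝ) (c : Fin n → ℝ)
    (p : (Fin n → ℝ) → ℝ)
    (K S E : Set (Fin n → ℝ))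
    (hK : K = {x | (∀ i, 0 ≤ x i ∧ x i ≤ 1) ∧ A.mulVec x = b})
    (hS : S = {x ∈ K | ∀ i, x i = 0 ∨ x i = 1})
    (hSne : S.Nonempty)
    (hpconc : ConcaveOn ℝ Set.univ p)
    (hpnonneg : ∀ x ∈ K, 0 ≤ p x)
    (hpS : {x ∈ K | p x ≤ 0} = S)
    (hE : E = {x ∈ Set.extremePoints ℝ K | 0 < p x})
    (hEne : E.Nonempty) (hEfin : E.Finite)
    (pmin α₀ t₀ : ℝ)
    (hpmin : pmin = sInf (p '' E))
    (hα₀ : α₀ = sInf ((fun x => ∑ i, c i * x i) '' K))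
    (ht₀ : t₀ = (sInf ((fun x => ∑ i, c i * x i) '' S) - α₀) / pmin) :
    ∀ t > t₀,
      {x ∈ S | ∀ y ∈ S, ∑ i, c i * x i ≤ ∑ i, c i * y i} =
      {x ∈ K | ∀ y ∈ K, (∑ i, c i * x i) + t * p x ≤ (∑ i, c i * y i) + t * p y} := by
  set f : (Fin n → ℝ) → ℝ := fun x => ∑ i, c i * x i
  have hKcomp : IsCompact K := hK ▸ isCompact_unitBox_mulVec_eq A b
  have hconv : Convex ℝ K := hK ▸ convex_unitBox_mulVec_eq A b
  have hSK : S ⊆ K := hpS ▸ sep_subset _ _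
  have hSfin : S.Finite := finite_setOf_forall_eq_zero_or_eq_one.subset fun x hx => (hS ▸ hx).2
  have hextfin : (extremePoints ℝ K).Finite := (hSfin.union hEfin).subset fun v hv => by
    by_cases hpv : p v ≤ 0
    exacts [Or.inl (hpS ▸ ⟨hv.1, hpv⟩), Or.inr (hE ▸ ⟨hv, not_le.1 hpv⟩)]
  obtain ⟨v₀, hv₀E, hv₀min⟩ := E.exists_min_image p hEfin hEne
  obtain ⟨s₀, hs₀S, hs₀min⟩ := S.exists_min_image f hSfin hSne
  obtain ⟨x₀, hx₀K, hx₀min⟩ :=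
    hKcomp.exists_isMinOn ⟨s₀, hSK hs₀S⟩ (by fun_prop : Continuous f).continuousOn
  rw [IsLeast.csInf_eq ⟨mem_image_of_mem p hv₀E, forall_mem_image.2 hv₀min⟩] at hpmin
  rw [IsLeast.csInf_eq ⟨mem_image_of_mem f hx₀K, forall_mem_image.2 hx₀min⟩] at hα₀
  rw [IsLeast.csInf_eq ⟨mem_image_of_mem f hs₀S, forall_mem_image.2 hs₀min⟩, hα₀, hpmin] at ht₀
  have hpv₀ : 0 < p v₀ := (hE ▸ hv₀E).2
  have ht₀_nonneg : 0 ≤ t₀ :=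
    ht₀ ▸ div_nonneg (sub_nonneg.2 (hx₀min (hSK hs₀S))) hpv₀.le
  -- `dotProductBilin ℝ ℝ c` is `f` as a linear map
  have hconc : ConcaveOn ℝ K fun x => f x + t₀ * p x :=
    ((dotProductBilin ℝ ℝ c).concaveOn hconv).add
      ((hpconc.subset (subset_univ K) hconv).smul ht₀_nonneg)
  have hbound : ∀ y ∈ K, f s₀ ≤ f y + t₀ * p y := fun y =>
    hconc.le_add_mul_of_extremePoints hKcomp hextfin hpnonneg (isMinOn_iff.1 hx₀min)
      (fun v hv hpv => hs₀min v (hpS ▸ ⟨hv.1, hpv⟩)) (fun v hv hpv => hv₀min v (hE ▸ ⟨hv, hpv⟩))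
      ht₀_nonneg
      (by rw [ht₀, div_mul_cancel₀ _ hpv₀.ne', add_sub_cancel])
  exact fun t ht => exact_penalty_argmin_eq hpnonneg hpS hs₀S hs₀min hbound ht

theorem stmt_8 (m n : ℕ) (A : Matrix (Fin m) (Fin n) ℝ) (b : Fin m → ℝ) (c : Fin n → ℝ)
    (p : (Fin n → ℝ) → ℝ)
    (K S E : Set (Fin n → ℝ))
    (hK : K = {x | (∀ i, 0 ≤ x i ∧ x i ≤ 1) ∧ A.mulVec x = b})
    (hS : S = {x ∈ K | ∀ i, x i = 0 ∨ x i = 1})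
    (hSne : S.Nonempty)
    (hpconc : ConcaveOn ℝ Set.univ p)
    (hpcont : Continuous p)
    (hpnonneg : ∀ x ∈ K, 0 ≤ p x)
    (hpS : {x ∈ K | p x ≤ 0} = S)
    (hE : E = {x ∈ Set.extremePoints ℝ K | 0 < p x})
    (hEne : E.Nonempty) (hEfin : E.Finite)
    (pmin α₀ t₀ : ℝ)
    (hpmin : pmin = sInf (p '' E))
    (hα₀ : α₀ = sInf ((fun x => ∑ i, c i * x i) '' K))
    (ht₀ : t₀ = (sInf ((fun x => ∑ i, c i * x i) '' S) - α₀) / pmin) :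
    ∀ t > t₀,
      {x ∈ S | ∀ y ∈ S, ∑ i, c i * x i ≤ ∑ i, c i * y i} =
      {x ∈ K | ∀ y ∈ K, (∑ i, c i * x i) + t * p x ≤ (∑ i, c i * y i) + t * p y} :=
  stmt_8_general m n A b c p K S E hK hS hSne hpconc hpnonneg hpS hE hEne hEfin pmin α₀ t₀ hpmin hα₀
    ht₀
end

section
/- (Descent property of DCA.) Let φ₁, φ₂ : ℝⁿ → ℝ be convex, and let (xᵏ) and (yᵏ) be sequences in ℝⁿ such that for every k, yᵏ is a subgradient of φ₂ at xᵏ, and x^{k+1} minimizes z ↦ φ₁(z) − ⟨z, yᵏ⟩ over ℝⁿ. Then the sequence k ↦ φ₁(xᵏ) − φ₂(xᵏ) is monotonically decreasing (antitone); in particular, if α := inf{φ₁(x) − φ₂(x) : x ∈ ℝⁿ} is finite, this sequence is bounded below by α. -/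
/-- `u` is a subgradient of `f` at `x`: `f z ≥ f x + ⟪u, z - x⟫` for all `z`. -/
def HasSubgradientAt {n : ℕ} (f : EuclideanSpace ℝ (Fin n) → ℝ)
    (u x : EuclideanSpace ℝ (Fin n)) : Prop :=
  ∀ z, f x + inner ℝ u (z - x) ≤ f z

theorem HasSubgradientAt.sub_le_sub_of_sub_inner_le {n : ℕ} {φ₁ φ₂ : EuclideanSpace ℝ (Fin n) → ℝ}
    {x x' y : EuclideanSpace ℝ (Fin n)} (hsub : HasSubgradientAt φ₂ y x)
    (hmin : φ₁ x' - inner ℝ x' y ≤ φ₁ x - inner ℝ x y) :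
    φ₁ x' - φ₂ x' ≤ φ₁ x - φ₂ x := by
  have hφ₂ : φ₂ x + (inner ℝ x' y - inner ℝ x y) ≤ φ₂ x' := by
    simpa only [inner_sub_right, real_inner_comm y] using hsub x'
  linarith

theorem stmt_9_general (n : ℕ) (φ₁ φ₂ : EuclideanSpace ℝ (Fin n) → ℝ)
    (x y : ℕ → EuclideanSpace ℝ (Fin n))
    (hsub : ∀ k, HasSubgradientAt φ₂ (y k) (x k))
    (hmin : ∀ k, ∀ z : EuclideanSpace ℝ (Fin n),
      φ₁ (x (k + 1)) - inner ℝ (x (k + 1)) (y k) ≤ φ₁ z - inner ℝ z (y k)) :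
    Antitone (fun k => φ₁ (x k) - φ₂ (x k)) ∧
    ∀ α : ℝ, IsGLB (Set.range fun z => φ₁ z - φ₂ z) α →
      ∀ k, α ≤ φ₁ (x k) - φ₂ (x k) :=
  ⟨antitone_nat_of_succ_le fun k => (hsub k).sub_le_sub_of_sub_inner_le (hmin k (x k)),
    fun _ hα k => hα.1 ⟨x k, rfl⟩⟩

theorem stmt_9 (n : ℕ) (φ₁ φ₂ : EuclideanSpace ℝ (Fin n) → ℝ)
    (hφ₁ : ConvexOn ℝ Set.univ φ₁) (hφ₂ : ConvexOn ℝ Set.univ φ₂)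
    (x y : ℕ → EuclideanSpace ℝ (Fin n))
    (hsub : ∀ k, HasSubgradientAt φ₂ (y k) (x k))
    (hmin : ∀ k, ∀ z : EuclideanSpace ℝ (Fin n),
      φ₁ (x (k + 1)) - inner ℝ (x (k + 1)) (y k) ≤ φ₁ z - inner ℝ z (y k)) :
    Antitone (fun k => φ₁ (x k) - φ₂ (x k)) ∧
    ∀ α : ℝ, IsGLB (Set.range fun z => φ₁ z - φ₂ z) α →
      ∀ k, α ≤ φ₁ (x k) - φ₂ (x k) :=
  stmt_9_general n φ₁ φ₂ x y hsub hmin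
end

section
/- (Inexact penalty for p₃.) Let (t_j) be a sequence of nonnegative reals with t_j → +∞ and for each j let x_j be a global minimizer of x ↦ ⟨c,x⟩ + t_j·p₃(x) over K. If x_j → x̄, then x̄ ∈ S and x̄ is a global optimal solution of min{⟨c,x⟩ : x ∈ S}. -/
open Real Filter Topology

theorem stmt_11 (m n : ℕ) (A : Matrix (Fin m) (Fin n) ℝ) (b : Fin m → ℝ) (c : Fin n → ℝ)
    (K S : Set (Fin n → ℝ))
    (hK : K = {x | (∀ i, 0 ≤ x i ∧ x i ≤ 1) ∧ A.mulVec x = b})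
    (hS : S = {x ∈ K | ∀ i, x i = 0 ∨ x i = 1})
    (hSne : S.Nonempty)
    (t : ℕ → ℝ) (ht0 : ∀ j, 0 ≤ t j) (htop : Tendsto t atTop atTop)
    (x : ℕ → Fin n → ℝ)
    (hxK : ∀ j, x j ∈ K)
    (hxmin : ∀ j, ∀ y ∈ K,
      (∑ i, c i * x j i) + t j * (∑ i, Real.sin (π * x j i) ^ 2) ≤
      (∑ i, c i * y i) + t j * (∑ i, Real.sin (π * y i) ^ 2))
    (xbar : Fin n → ℝ) (hconv : Tendsto x atTop (nhds xbar)) :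
    xbar ∈ S ∧ ∀ y ∈ S, (∑ i, c i * xbar i) ≤ ∑ i, c i * y i := by
  -- coordinate convergence
  have hcoord : ∀ i, Tendsto (fun j => x j i) atTop (nhds (xbar i)) :=
    tendsto_pi_nhds.mp hconv
  -- penalty vanishes on S
  have hpzero : ∀ y ∈ S, (∑ i, Real.sin (π * y i) ^ 2) = 0 := by
    intro y hy
    rw [hS] at hy
    apply Finset.sum_eq_zero
    intro i _
    rcases hy.2 i with h | h <;> simp [h, Real.sin_pi]
  -- convergence of the objective and penalty
  have hcx : Tendsto (fun j => ∑ i, c i * x j i) atTop (nhds (∑ i, c i * xbar i)) :=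
    tendsto_finset_sum _ fun i _ => (hcoord i).const_mul (c i)
  have hp : Tendsto (fun j => ∑ i, Real.sin (π * x j i) ^ 2) atTop
      (nhds (∑ i, Real.sin (π * xbar i) ^ 2)) := by
    refine tendsto_finset_sum _ fun i _ => ?_
    exact ((Real.continuous_sin.tendsto _).comp ((hcoord i).const_mul π)).pow 2
  obtain ⟨s, hsS⟩ := hSne
  have hsK : s ∈ K := by rw [hS] at hsS; exact hsS.1
  -- key bound
  have hbd : ∀ j, (∑ i, c i * x j i) + t j * (∑ i, Real.sin (π * x j i) ^ 2)
      ≤ ∑ i, c i * s i := by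
    intro j
    have := hxmin j s hsK
    rwa [hpzero s hsS, mul_zero, add_zero] at this
  have hPnn : ∀ j, 0 ≤ ∑ i, Real.sin (π * x j i) ^ 2 := fun j =>
    Finset.sum_nonneg fun i _ => sq_nonneg _
  -- the limit penalty is zero
  have hPbar : (∑ i, Real.sin (π * xbar i) ^ 2) = 0 := by
    by_contra hne
    have hpos : 0 < ∑ i, Real.sin (π * xbar i) ^ 2 := by
      rcases lt_or_eq_of_le (Finset.sum_nonneg fun i _ => sq_nonneg (Real.sin (π * xbar i))) with h | h
      · exact h
      · exact absurd h.symm hne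
    set P := ∑ i, Real.sin (π * xbar i) ^ 2
    have h1 : ∀ᶠ j in atTop, P / 2 ≤ ∑ i, Real.sin (π * x j i) ^ 2 :=
      hp.eventually (eventually_ge_nhds (by linarith))
    have h2 : ∀ᶠ j in atTop, (∑ i, c i * xbar i) - 1 ≤ ∑ i, c i * x j i :=
      hcx.eventually (eventually_ge_nhds (by linarith))
    have h3 : Tendsto (fun j => t j * (P / 2)) atTop atTop :=
      htop.atTop_mul_const (by linarith)
    have h4 : ∀ᶠ j in atTop, (∑ i, c i * s i) - ((∑ i, c i * xbar i) - 1) <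
        t j * (P / 2) := h3.eventually_gt_atTop _
    obtain ⟨j, hj1, hj2, hj3⟩ := (h1.and (h2.and h4)).exists
    have := hbd j
    have hmul : t j * (P / 2) ≤ t j * (∑ i, Real.sin (π * x j i) ^ 2) :=
      mul_le_mul_of_nonneg_left hj1 (ht0 j)
    linarith
  -- each coordinate of xbar is 0 or 1
  have hxbarK : xbar ∈ K := by
    rw [hK]
    constructor
    · intro i
      have h0 : ∀ j, 0 ≤ x j i ∧ x j i ≤ 1 := fun j => by
        have := hxK j; rw [hK] at this; exact this.1 i
      constructor
      · exact le_of_tendsto_of_tendsto tendsto_const_nhds (hcoord i)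
          (Eventually.of_forall fun j => (h0 j).1)
      · exact le_of_tendsto_of_tendsto (hcoord i) tendsto_const_nhds
          (Eventually.of_forall fun j => (h0 j).2)
    · funext i
      have heq : ∀ j, A.mulVec (x j) i = b i := fun j => by
        have := hxK j; rw [hK] at this; exact congrFun this.2 i
      have h1 : Tendsto (fun j => A.mulVec (x j) i) atTop (nhds (A.mulVec xbar i)) := by
        simp only [Matrix.mulVec, dotProduct]
        exact tendsto_finset_sum _ fun k _ => (hcoord k).const_mul (A i k)
      have h2 : Tendsto (fun j => A.mulVec (x j) i) atTop (nhds (b i)) := by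
        simp only [heq]; exact tendsto_const_nhds
      exact tendsto_nhds_unique h1 h2
  have hxbarS : xbar ∈ S := by
    rw [hS]
    refine ⟨hxbarK, fun i => ?_⟩
    have hterm : Real.sin (π * xbar i) ^ 2 = 0 := by
      have := (Finset.sum_eq_zero_iff_of_nonneg
        (fun i _ => sq_nonneg (Real.sin (π * xbar i)))).mp hPbar i (Finset.mem_univ i)
      exact this
    have hsin : Real.sin (π * xbar i) = 0 := by
      exact pow_eq_zero_iff (two_ne_zero) |>.mp hterm
    rw [Real.sin_eq_zero_iff] at hsin
    obtain ⟨k, hk⟩ := hsin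
    have hpi : (0:ℝ) < π := Real.pi_pos
    have hx : xbar i = (k : ℝ) := by
      have : π * xbar i = π * (k : ℝ) := by rw [← hk]; ring
      exact (mul_left_cancel₀ (ne_of_gt hpi) this)
    have hb : 0 ≤ xbar i ∧ xbar i ≤ 1 := by
      rw [hK] at hxbarK; exact hxbarK.1 i
    have hk0 : (0:ℤ) ≤ k := by exact_mod_cast hx ▸ hb.1
    have hk1 : k ≤ 1 := by exact_mod_cast hx ▸ hb.2
    interval_cases k
    · left; simpa using hx
    · right; simpa using hx
  refine ⟨hxbarS, fun y hyS => ?_⟩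
  have hyK : y ∈ K := by rw [hS] at hyS; exact hyS.1
  have hle : ∀ j, (∑ i, c i * x j i) ≤ ∑ i, c i * y i := by
    intro j
    have h := hxmin j y hyK
    rw [hpzero y hyS, mul_zero, add_zero] at h
    have := mul_nonneg (ht0 j) (hPnn j)
    linarith
  exact le_of_tendsto_of_tendsto hcx tendsto_const_nhds (Eventually.of_forall hle)
end
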